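/- arXiv:2402.15470 — 6 statements merged into one kernel-verified Lean document; each statement's English description precedes it below -/
import Mathlib

section
/- If G is a non-null graph with m edges and minimum degree δ(G), and α ∈ [0,1), then the smallest eigenvalue of A_α(l(G)) satisfies λ_m(A_α(l(G))) ≥ 2αδ(G) − 2. -/
open Matrix SimpleGraph Finset

noncomputable def Aalpha {V : Type*} [Fintype V] (α : ℝ) (G : SimpleGraph V) : Matrix V V ℝ :=
  letI := Classical.decEq V
  letI : DecidableRel G.Adj := Classical.decRel _
  α • Matrix.diagonal (fun v => (G.degree v : ℝ)) + (1 - α) • G.adjMatrix ℝ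

noncomputable instance edgeSetFintype {V : Type*} [Fintype V] (G : SimpleGraph V) :
    Fintype G.edgeSet :=
  Set.Finite.fintype (Set.toFinite _)

open scoped Classical in
noncomputable def incB {V : Type*} [Fintype V] (G : SimpleGraph V) : Matrix V G.edgeSet ℝ :=
  fun v e => if v ∈ (e : Sym2 V) then 1 else 0

noncomputable def edgeDegSum {V : Type*} [Fintype V] (G : SimpleGraph V) (e : Sym2 V) : ℝ :=
  letI := Classical.decEq V
  letI : DecidableRel G.Adj := Classical.decRel _
  Sym2.lift ⟨fun a b => (G.degree a : ℝ) + (G.degree b : ℝ), fun a b => by ring⟩ e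

set_option linter.unusedSectionVars false
section aux

variable {V : Type*} [Fintype V]

/-- every edge has a representation s(a,b) with G.Adj a b -/
lemma edge_rep (G : SimpleGraph V) (e : G.edgeSet) :
    ∃ a b : V, G.Adj a b ∧ (e : Sym2 V) = s(a, b) := by
  obtain ⟨e, he⟩ := e
  induction e using Sym2.ind with
  | _ a b => exact ⟨a, b, he, rfl⟩

lemma incB_sum_mul (G : SimpleGraph V) {a b : V} (hab : a ≠ b)
    (e : G.edgeSet) (he : (e : Sym2 V) = s(a, b)) (g : V → ℝ) :
    ∑ v, incB G v e * g v = g a + g b := by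
  classical
  have h : ∀ v, incB G v e = (if v = a then (1:ℝ) else 0) + (if v = b then 1 else 0) := by
    intro v
    simp only [incB, he, Sym2.mem_iff]
    by_cases h1 : v = a
    · by_cases h2 : v = b
      · exact absurd (h1.symm.trans h2) hab
      · simp [h1, h2, hab]
    · by_cases h2 : v = b <;> simp [h1, h2, hab, Ne.symm hab]
  simp only [h, add_mul, Finset.sum_add_distrib, ite_mul, one_mul, zero_mul]
  rw [Finset.sum_ite_eq' Finset.univ a g, Finset.sum_ite_eq' Finset.univ b g]
  simp

open scoped Classical in
lemma sum_incB (G : SimpleGraph V) (e f : G.edgeSet) :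
    ∑ v, incB G v e * incB G v f =
      (if G.lineGraph.Adj e f then (1:ℝ) else 0) + (if e = f then 2 else 0) := by
  classical
  obtain ⟨a, b, hadj, he⟩ := edge_rep G e
  have hab : a ≠ b := hadj.ne
  rw [incB_sum_mul G hab e he (fun v => incB G v f)]
  by_cases hef : e = f
  · subst hef
    have : ¬ G.lineGraph.Adj e e := (G.lineGraph).irrefl
    simp [incB, he, this]
    norm_num
  · have hne : (e : Sym2 V) ≠ (f : Sym2 V) := fun h => hef (Subtype.ext h)
    have hmema : a ∈ (e : Sym2 V) := by rw [he]; exact Sym2.mem_mk_left a b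
    have hmemb : b ∈ (e : Sym2 V) := by rw [he]; exact Sym2.mem_mk_right a b
    by_cases ha : a ∈ (f : Sym2 V) <;> by_cases hb : b ∈ (f : Sym2 V)
    · exact absurd (((Sym2.mem_and_mem_iff hab).mp ⟨ha, hb⟩).trans he.symm) hne.symm
    · have hadj' : G.lineGraph.Adj e f := lineGraph_adj_iff_exists.mpr ⟨hef, a, hmema, ha⟩
      simp [incB, ha, hb, hadj', hef]
    · have hadj' : G.lineGraph.Adj e f := lineGraph_adj_iff_exists.mpr ⟨hef, b, hmemb, hb⟩
      simp [incB, ha, hb, hadj', hef]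
    · have hnadj : ¬ G.lineGraph.Adj e f := by
        intro h
        obtain ⟨-, v, hv1, hv2⟩ := lineGraph_adj_iff_exists.mp h
        rw [he, Sym2.mem_iff] at hv1
        rcases hv1 with rfl | rfl
        exacts [ha hv2, hb hv2]
      simp [incB, ha, hb, hnadj, hef]

lemma lineGraph_degree_bound (G : SimpleGraph V) [DecidableRel G.Adj] [Nonempty V]
    (e : G.edgeSet) [Fintype ((G.lineGraph).neighborSet e)] :
    2 * G.minDegree ≤ (G.lineGraph).degree e + 2 := by
  classical
  obtain ⟨u, v, hadj, he⟩ := edge_rep G e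
  have huv : u ≠ v := hadj.ne
  set T : Finset (Sym2 V) := ((G.lineGraph).neighborFinset e).image Subtype.val with hT
  set A1 : Finset (Sym2 V) := ((G.neighborFinset u).erase v).image (fun w => s(u, w)) with hA1
  set A2 : Finset (Sym2 V) := ((G.neighborFinset v).erase u).image (fun w => s(v, w)) with hA2
  have hinj : ∀ c : V, Function.Injective (fun w => s(c, w)) := by
    intro c w w' h
    simpa using Sym2.congr_right.mp h
  have hA1card : A1.card = G.degree u - 1 := by
    rw [hA1, Finset.card_image_of_injective _ (hinj u),
      Finset.card_erase_of_mem (by simpa using hadj), SimpleGraph.degree]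
  have hA2card : A2.card = G.degree v - 1 := by
    rw [hA2, Finset.card_image_of_injective _ (hinj v),
      Finset.card_erase_of_mem (by simpa using hadj.symm), SimpleGraph.degree]
  have hTcard : T.card = (G.lineGraph).degree e := by
    rw [hT, Finset.card_image_of_injective _ Subtype.val_injective, SimpleGraph.degree]
  have hsub : ∀ (c c' : V), G.Adj c c' → (e : Sym2 V) = s(c, c') →
      ∀ w ∈ (G.neighborFinset c).erase c', s(c, w) ∈ T := by
    intro c c' hcc' hec w hw
    rw [Finset.mem_erase, SimpleGraph.mem_neighborFinset] at hw
    obtain ⟨hwc', hcw⟩ := hw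
    have hmem : s(c, w) ∈ G.edgeSet := hcw
    rw [hT, Finset.mem_image]
    refine ⟨⟨s(c, w), hmem⟩, ?_, rfl⟩
    rw [SimpleGraph.mem_neighborFinset]
    refine lineGraph_adj_iff_exists.mpr ⟨?_, c, by simp [hec], by simp⟩
    intro hcon
    apply hwc'
    have : s(c, c') = s(c, w) := by rw [← hec, hcon]
    simpa using (Sym2.congr_right.mp this).symm
  have hdisj : Disjoint A1 A2 := by
    rw [Finset.disjoint_left]
    intro s hs1 hs2
    rw [hA1, Finset.mem_image] at hs1
    rw [hA2, Finset.mem_image] at hs2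
    obtain ⟨w, hw, rfl⟩ := hs1
    obtain ⟨w', hw', heq⟩ := hs2
    rw [Finset.mem_erase] at hw hw'
    rw [Sym2.eq_iff] at heq
    rcases heq with ⟨rfl, rfl⟩ | ⟨rfl, rfl⟩
    · exact huv rfl
    · exact hw.1 rfl
  have hunion : (A1 ∪ A2).card ≤ T.card := by
    apply Finset.card_le_card
    rw [Finset.union_subset_iff]
    constructor
    · rw [hA1]
      intro s hs
      rw [Finset.mem_image] at hs
      obtain ⟨w, hw, rfl⟩ := hs
      exact hsub u v hadj he w hw
    · rw [hA2]
      intro s hs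
      rw [Finset.mem_image] at hs
      obtain ⟨w, hw, rfl⟩ := hs
      exact hsub v u hadj.symm (by rwa [Sym2.eq_swap]) w hw
  rw [Finset.card_union_of_disjoint hdisj, hA1card, hA2card, hTcard] at hunion
  have hdu : 1 ≤ G.degree u := Finset.card_pos.mpr ⟨v, by simpa using hadj⟩
  have hdv : 1 ≤ G.degree v := Finset.card_pos.mpr ⟨u, by simpa using hadj.symm⟩
  have h1 := G.minDegree_le_degree u
  have h2 := G.minDegree_le_degree v
  omega

open scoped Classical in
lemma Aalpha_lineGraph_eq (G : SimpleGraph V) (α : ℝ) :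
    Aalpha α G.lineGraph =
      α • Matrix.diagonal (fun e => ((G.lineGraph).degree e : ℝ))
        + (1 - α) • (G.lineGraph).adjMatrix ℝ := by
  rw [Aalpha]
  congr!

open scoped Classical in
lemma key (G : SimpleGraph V) [DecidableRel G.Adj] [Nonempty V] {α : ℝ}
    (h0 : 0 ≤ α) (h1 : α ≤ 1) (x : G.edgeSet → ℝ) :
    (2 * α * (G.minDegree : ℝ) - 2) * (∑ e, x e * x e)
      ≤ x ⬝ᵥ ((Aalpha α G.lineGraph) *ᵥ x) := by
  rw [Aalpha_lineGraph_eq, Matrix.add_mulVec, dotProduct_add, Matrix.smul_mulVec,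
    dotProduct_smul, Matrix.smul_mulVec, dotProduct_smul, smul_eq_mul, smul_eq_mul]
  have hD : (2 * (G.minDegree : ℝ) - 2) * (∑ e, x e * x e)
      ≤ x ⬝ᵥ ((Matrix.diagonal (fun e => ((G.lineGraph).degree e : ℝ))) *ᵥ x) := by
    have hdd : x ⬝ᵥ ((Matrix.diagonal (fun e => ((G.lineGraph).degree e : ℝ))) *ᵥ x)
        = ∑ e, x e * (((G.lineGraph).degree e : ℝ) * x e) := by
      simp [dotProduct, Matrix.mulVec_diagonal]
    rw [hdd, Finset.mul_sum]
    apply Finset.sum_le_sum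
    intro e _
    have hd : 2 * (G.minDegree : ℝ) - 2 ≤ ((G.lineGraph).degree e : ℝ) := by
      have h := lineGraph_degree_bound G e
      have h' : (2 * G.minDegree : ℝ) ≤ ((G.lineGraph).degree e : ℝ) + 2 := by
        exact_mod_cast h
      linarith
    nlinarith [mul_self_nonneg (x e)]
  have hA : (-2) * (∑ e, x e * x e) ≤ x ⬝ᵥ (((G.lineGraph).adjMatrix ℝ) *ᵥ x) := by
    have hentry : ∀ e f : G.edgeSet, ((G.lineGraph).adjMatrix ℝ) e f
        = (∑ v, incB G v e * incB G v f) - (if e = f then 2 else 0) := by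
      intro e f
      rw [sum_incB]
      simp [SimpleGraph.adjMatrix_apply]
    have hexp : x ⬝ᵥ (((G.lineGraph).adjMatrix ℝ) *ᵥ x)
        = (∑ v, (∑ e, incB G v e * x e) * (∑ e, incB G v e * x e))
          - 2 * ∑ e, x e * x e := by
      calc x ⬝ᵥ (((G.lineGraph).adjMatrix ℝ) *ᵥ x)
          = ∑ e, ∑ f, ((G.lineGraph).adjMatrix ℝ) e f * (x e * x f) := by
            simp only [dotProduct, Matrix.mulVec, Finset.mul_sum]
            exact Finset.sum_congr rfl fun e _ => Finset.sum_congr rfl fun f _ => by ring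
        _ = ∑ e, ∑ f, ((∑ v, (incB G v e * x e) * (incB G v f * x f))
              - (if e = f then (2:ℝ) else 0) * (x e * x f)) := by
            refine Finset.sum_congr rfl fun e _ => Finset.sum_congr rfl fun f _ => ?_
            rw [hentry, sub_mul, Finset.sum_mul]
            congr 1
            exact Finset.sum_congr rfl fun v _ => by ring
        _ = (∑ e, ∑ f, ∑ v, (incB G v e * x e) * (incB G v f * x f))
              - ∑ e, ∑ f, (if e = f then (2:ℝ) else 0) * (x e * x f) := by
            rw [← Finset.sum_sub_distrib]
            exact Finset.sum_congr rfl fun e _ => by rw [Finset.sum_sub_distrib]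
        _ = (∑ v, (∑ e, incB G v e * x e) * (∑ e, incB G v e * x e))
              - 2 * ∑ e, x e * x e := by
            congr 1
            · rw [Finset.sum_congr rfl fun e (_ : e ∈ Finset.univ) => Finset.sum_comm,
                Finset.sum_comm]
              exact Finset.sum_congr rfl fun v _ => (Fintype.sum_mul_sum _ _).symm
            · rw [Finset.mul_sum]
              refine Finset.sum_congr rfl fun e _ => ?_
              have : ∀ f : G.edgeSet, (if e = f then (2:ℝ) else 0) * (x e * x f)
                  = if e = f then 2 * (x e * x f) else 0 := by
                intro f; split <;> simp
              rw [Finset.sum_congr rfl fun f _ => this f, Finset.sum_ite_eq]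
              simp
    rw [hexp]
    have hvsum : 0 ≤ ∑ v, (∑ e, incB G v e * x e) * (∑ e, incB G v e * x e) :=
      Finset.sum_nonneg fun v _ => mul_self_nonneg _
    linarith
  have e1 := mul_le_mul_of_nonneg_left hD h0
  have e2 := mul_le_mul_of_nonneg_left hA (by linarith : (0:ℝ) ≤ 1 - α)
  have hring : (2 * α * (G.minDegree : ℝ) - 2) * (∑ e, x e * x e)
      = α * ((2 * (G.minDegree : ℝ) - 2) * (∑ e, x e * x e))
        + (1 - α) * ((-2) * (∑ e, x e * x e)) := by ring
  rw [hring]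
  exact add_le_add e1 e2

end aux

theorem stmt2 {V : Type*} [Fintype V] [DecidableEq V] [Nonempty V]
    (G : SimpleGraph V) [DecidableRel G.Adj] (hG : G.edgeSet.Nonempty)
    (α : ℝ) (hα : α ∈ Set.Ico (0:ℝ) 1)
    (hM : (Aalpha α (G.lineGraph)).IsHermitian) :
    ∀ i, 2 * α * (G.minDegree : ℝ) - 2 ≤ hM.eigenvalues i := by
  intro i
  have horm := hM.eigenvectorBasis.orthonormal.1 i
  set x : G.edgeSet → ℝ := ⇑(hM.eigenvectorBasis i) with hxdef
  have hnorm : ∑ e, x e * x e = 1 := by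
    have h2 : ∑ e, ‖x e‖ ^ 2 = 1 := by
      rw [EuclideanSpace.norm_eq] at horm
      exact Real.sqrt_eq_one.mp horm
    calc ∑ e, x e * x e = ∑ e, ‖x e‖ ^ 2 :=
          Finset.sum_congr rfl fun e _ => by rw [Real.norm_eq_abs, sq_abs, sq]
      _ = 1 := h2
  have hb := key G hα.1 (le_of_lt hα.2) x
  rw [hnorm, mul_one] at hb
  rw [hM.eigenvalues_eq i]
  have hstar : star x = x := by funext e; simp
  simpa [hstar, ← hxdef] using hb
end

section
/- Let G be a graph of order n ≥ 2 with maximum degree Δ, minimum degree δ, and α ∈ [0,1]. Then λ₁(A_α(G)) ≥ (α(Δ + δ) + √(α²(Δ − δ)² + 4(1−α)²Δ))/2. -/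
/-!
Test the Rayleigh quotient of `A_α(G)` on `x = p e_u + q 1_{N(u)}`, where `u` has degree `Δ`.
Since the entries of `A_α(G)` are nonnegative, dropping the entries between distinct neighbours
of `u` bounds `xᵀ A_α x` below by the quadratic form of `[[αΔ, (1-α)Δ], [(1-α)Δ, αδΔ]]`, while
`xᵀx = p² + Δq²`. The claimed bound is the largest root `L` of `(L - αΔ)(L - αδ) = (1-α)²Δ`, and
`(p, q) = (L - αδ, 1 - α)` makes the quotient of these two forms equal to `L`.
-/

open Matrix SimpleGraph Finset

open scoped MatrixOrder in
theorem Matrix.IsHermitian.dotProduct_mulVec_le_iSup_eigenvalues_mul {n : Type*} [Fintype n]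
    [DecidableEq n] {A : Matrix n n ℝ} (hA : A.IsHermitian) (x : n → ℝ) :
    x ⬝ᵥ A *ᵥ x ≤ (⨆ i, hA.eigenvalues i) * (x ⬝ᵥ x) := by
  have hle : A ≤ algebraMap ℝ _ (⨆ i, hA.eigenvalues i) := by
    refine le_algebraMap_of_spectrum_le ?_ hA.isSelfAdjoint
    rw [hA.spectrum_real_eq_range_eigenvalues]
    rintro _ ⟨i, rfl⟩
    exact le_ciSup (Set.finite_range _).bddAbove i
  simpa [sub_mulVec, Algebra.algebraMap_eq_smul_one, smul_mulVec, dotProduct_smul] using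
    (Matrix.le_iff.mp hle).dotProduct_mulVec_nonneg x

theorem Matrix.dotProduct_mulVec_smul_single_add_smul_sum_single {n : Type*} [Fintype n]
    [DecidableEq n] (A : Matrix n n ℝ) (u : n) (N : Finset n) (p q : ℝ) :
    let x := p • Pi.single u 1 + q • ∑ v ∈ N, Pi.single v 1
    x ⬝ᵥ A *ᵥ x = p ^ 2 * A u u + p * q * ∑ v ∈ N, (A u v + A v u)
      + q ^ 2 * ∑ v ∈ N, ∑ w ∈ N, A v w := by
  simp only [add_dotProduct, dotProduct_add, mulVec_add, mulVec_smul, mulVec_sum, dotProduct_sum,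
    sum_dotProduct, smul_dotProduct, dotProduct_smul, single_one_dotProduct, mulVec_single_one,
    col_apply, smul_eq_mul]
  rw [sum_add_distrib, ← mul_sum, ← mul_sum, sum_add_distrib, sum_comm (f := fun v w => A v w)]
  ring

theorem le_of_forall_quadratic_le {α Δ δ μ : ℝ} (hα : 0 ≤ α) (hΔ : 0 ≤ Δ) (hδΔ : δ ≤ Δ)
    (h : ∀ p q : ℝ,
      α * Δ * p ^ 2 + 2 * (1 - α) * Δ * p * q + α * δ * Δ * q ^ 2 ≤ μ * (p ^ 2 + Δ * q ^ 2)) :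
    (α * (Δ + δ) + √(α ^ 2 * (Δ - δ) ^ 2 + 4 * (1 - α) ^ 2 * Δ)) / 2 ≤ μ := by
  set R := √(α ^ 2 * (Δ - δ) ^ 2 + 4 * (1 - α) ^ 2 * Δ)
  have hR : R ^ 2 = α ^ 2 * (Δ - δ) ^ 2 + 4 * (1 - α) ^ 2 * Δ :=
    Real.sq_sqrt (by nlinarith [sq_nonneg (α * (Δ - δ)), sq_nonneg (1 - α)])
  set L := (α * (Δ + δ) + R) / 2 with hL
  have hroot : (L - α * Δ) * (L - α * δ) = (1 - α) ^ 2 * Δ := by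
    rw [hL]
    linear_combination hR / 4
  by_cases hLδ : α * δ < L
  · have hpos : 0 < (L - α * δ) ^ 2 + Δ * (1 - α) ^ 2 := by nlinarith [sq_nonneg (1 - α)]
    refine le_of_mul_le_mul_right (le_of_eq_of_le ?_ (h (L - α * δ) (1 - α))) hpos
    linear_combination (L - α * δ) * hroot
  · have hαΔ := h 1 0
    simp only [one_pow, mul_one, mul_zero, zero_pow two_ne_zero, add_zero] at hαΔ
    nlinarith [mul_le_mul_of_nonneg_left hδΔ hα]

section Aalpha

variable {V : Type*} [Fintype V] [DecidableEq V] (G : SimpleGraph V) [DecidableRel G.Adj]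
  {α : ℝ}

theorem Aalpha_eq :
    Aalpha α G = α • diagonal (fun v => (G.degree v : ℝ)) + (1 - α) • G.adjMatrix ℝ := by
  unfold Aalpha
  congr!

theorem Aalpha_apply_self (v : V) : Aalpha α G v v = α * G.degree v := by
  simp [Aalpha_eq]

theorem Aalpha_apply_of_adj {v w : V} (h : G.Adj v w) : Aalpha α G v w = 1 - α := by
  simp [Aalpha_eq, h, h.ne]

theorem Aalpha_nonneg (hα : α ∈ Set.Icc (0 : ℝ) 1) (v w : V) : 0 ≤ Aalpha α G v w := by
  obtain ⟨hα0, hα1⟩ := hα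
  simp only [Aalpha_eq, Matrix.add_apply, Matrix.smul_apply, diagonal_apply, adjMatrix_apply,
    smul_eq_mul]
  split_ifs <;> nlinarith

theorem Aalpha_quadratic_le_iSup_eigenvalues_mul [Nonempty V] (hα : α ∈ Set.Icc (0 : ℝ) 1)
    (hM : (Aalpha α G).IsHermitian) (p q : ℝ) :
    α * G.maxDegree * p ^ 2 + 2 * (1 - α) * G.maxDegree * p * q
        + α * G.minDegree * G.maxDegree * q ^ 2
      ≤ (⨆ i, hM.eigenvalues i) * (p ^ 2 + G.maxDegree * q ^ 2) := by
  obtain ⟨u, hu⟩ := G.exists_maximal_degree_vertex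
  set N := G.neighborFinset u
  have hN : (#N : ℝ) = G.maxDegree := by rw [card_neighborFinset_eq_degree, hu]
  have huN : u ∉ N := G.notMem_neighborFinset_self u
  have hxx := (1 : Matrix V V ℝ).dotProduct_mulVec_smul_single_add_smul_sum_single u N p q
  simp only [one_mulVec, one_apply, sum_add_distrib, sum_ite_eq, sum_ite_eq', huN,
    if_true, if_false, add_zero, mul_zero, mul_one, sum_boole, filter_mem_eq_inter, inter_self,
    hN] at hxx
  have hxAx := (Aalpha α G).dotProduct_mulVec_smul_single_add_smul_sum_single u N p q
  dsimp only at hxAx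
  have hcross : ∑ v ∈ N, (Aalpha α G u v + Aalpha α G v u) = 2 * (1 - α) * G.maxDegree := by
    rw [sum_congr rfl fun v hv => by
      rw [Aalpha_apply_of_adj G ((G.mem_neighborFinset u v).mp hv),
        Aalpha_apply_of_adj G ((G.mem_neighborFinset u v).mp hv).symm]]
    simp only [sum_const, nsmul_eq_mul, hN]
    ring
  have hblock : α * G.minDegree * G.maxDegree ≤ ∑ v ∈ N, ∑ w ∈ N, Aalpha α G v w :=
    calc α * G.minDegree * G.maxDegree = ∑ _v ∈ N, α * G.minDegree := by
          rw [sum_const, nsmul_eq_mul, hN]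
          ring
      _ ≤ ∑ v ∈ N, Aalpha α G v v := sum_le_sum fun v _ => by
          rw [Aalpha_apply_self]
          exact mul_le_mul_of_nonneg_left (by exact_mod_cast G.minDegree_le_degree v) hα.1
      _ ≤ ∑ v ∈ N, ∑ w ∈ N, Aalpha α G v w :=
          sum_le_sum fun v hv => single_le_sum (fun w _ => Aalpha_nonneg G hα v w) hv
  have hRayleigh := hM.dotProduct_mulVec_le_iSup_eigenvalues_mul
    (p • Pi.single u 1 + q • ∑ v ∈ N, Pi.single v 1)
  rw [hxAx, hxx, Aalpha_apply_self, ← hu, hcross] at hRayleigh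
  nlinarith [mul_le_mul_of_nonneg_left hblock (sq_nonneg q)]

end Aalpha

theorem stmt3_general {V : Type*} [Fintype V] [DecidableEq V] [Nonempty V]
    (G : SimpleGraph V) [DecidableRel G.Adj]
    (α : ℝ) (hα : α ∈ Set.Icc (0:ℝ) 1) (hM : (Aalpha α G).IsHermitian) :
    (α * ((G.maxDegree : ℝ) + (G.minDegree : ℝ)) +
        Real.sqrt (α ^ 2 * ((G.maxDegree : ℝ) - (G.minDegree : ℝ)) ^ 2 +
          4 * (1 - α) ^ 2 * (G.maxDegree : ℝ))) / 2 ≤ ⨆ i, hM.eigenvalues i :=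
  le_of_forall_quadratic_le hα.1 (Nat.cast_nonneg _) (by exact_mod_cast G.minDegree_le_maxDegree)
    (Aalpha_quadratic_le_iSup_eigenvalues_mul G hα hM)

theorem stmt3 {V : Type*} [Fintype V] [DecidableEq V] [Nonempty V]
    (G : SimpleGraph V) [DecidableRel G.Adj] (hn : 2 ≤ Fintype.card V)
    (α : ℝ) (hα : α ∈ Set.Icc (0:ℝ) 1) (hM : (Aalpha α G).IsHermitian) :
    (α * ((G.maxDegree : ℝ) + (G.minDegree : ℝ)) +
        Real.sqrt (α ^ 2 * ((G.maxDegree : ℝ) - (G.minDegree : ℝ)) ^ 2 +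
          4 * (1 - α) ^ 2 * (G.maxDegree : ℝ))) / 2 ≤ ⨆ i, hM.eigenvalues i :=
  stmt3_general G α hα hM
end

section
/- Let r be a positive integer and α ∈ [0,1]. Then (α(2r) + √(α²·0 + 4(1−α)²r))/2 = αr + (1−α)√r is greater than or equal to (α(r+1) + √(α²(r+1)² + 4r(1−2α)))/2. In other words, for r-regular graphs the lower bound αr + (1−α)√r for λ₁(A_α(G)) is at least Nikiforov's bound (α(Δ+1) + √(α²(Δ+1)² + 4Δ(1−2α)))/2 with Δ = r. -/
open Matrix SimpleGraph Finset

theorem stmt8 (r : ℕ) (hr : 1 ≤ r) (α : ℝ) (hα : α ∈ Set.Icc (0:ℝ) 1) :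
    (α * (2 * (r : ℝ)) + Real.sqrt (α ^ 2 * 0 + 4 * (1 - α) ^ 2 * (r : ℝ))) / 2 =
        α * (r : ℝ) + (1 - α) * Real.sqrt (r : ℝ) ∧
      (α * ((r : ℝ) + 1) +
          Real.sqrt (α ^ 2 * ((r : ℝ) + 1) ^ 2 + 4 * (r : ℝ) * (1 - 2 * α))) / 2 ≤
        α * (r : ℝ) + (1 - α) * Real.sqrt (r : ℝ) := by
  obtain ⟨h0, h1⟩ := hα
  have hr1 : (1 : ℝ) ≤ (r : ℝ) := by exact_mod_cast hr
  have hrpos : (0 : ℝ) ≤ (r : ℝ) := by linarith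
  set s := Real.sqrt (r : ℝ) with hs
  have hs0 : 0 ≤ s := Real.sqrt_nonneg _
  have hsq : s ^ 2 = (r : ℝ) := Real.sq_sqrt hrpos
  have hs1 : 1 ≤ s := by
    nlinarith [hsq]
  constructor
  · have : α ^ 2 * 0 + 4 * (1 - α) ^ 2 * (r : ℝ) = (2 * (1 - α) * s) ^ 2 := by
      nlinarith [hsq]
    rw [this, Real.sqrt_sq (by nlinarith)]
    ring
  · have hB : 0 ≤ 2 * (α * (r : ℝ) + (1 - α) * s) - α * ((r : ℝ) + 1) := by
      nlinarith
    have key : α ^ 2 * ((r : ℝ) + 1) ^ 2 + 4 * (r : ℝ) * (1 - 2 * α) ≤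
        (2 * (α * (r : ℝ) + (1 - α) * s) - α * ((r : ℝ) + 1)) ^ 2 := by
      nlinarith [mul_nonneg (mul_nonneg h0 (by linarith : (0:ℝ) ≤ 1 - α)) (mul_nonneg (by linarith : (0:ℝ) ≤ (r:ℝ) - 1) hs0), hsq]
    have := Real.sqrt_le_sqrt key
    rw [Real.sqrt_sq hB] at this
    linarith
end

section
/- Let G be an r-regular graph with n vertices, m ≥ 1 edges, r ≥ 2, and α ∈ [0,1). Then the A_α-characteristic polynomial of l(G) satisfies P_{A_α(l(G))}(λ) = (λ − 2rα + 2)^{m−n} (1−α)^n P_{Q(G)}((λ − 2rα + 2)/(1−α)), where Q(G) = D(G) + A(G) is the signless Laplacian. -/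
open Matrix SimpleGraph Finset

/-! With `B` the vertex–edge incidence matrix of `G`, one has `B Bᵀ = Q(G)` and
`Bᵀ B = 2 I + A(l(G))`. Since `l(G)` is `(2r - 2)`-regular, this gives
`A_α(l(G)) = (1 - α) Bᵀ B + (2rα - 2) I`. The characteristic polynomials of `Bᵀ B` and `B Bᵀ`
differ by the factor `X ^ (m - n)` (here `n ≤ m` because `r ≥ 2`), and an affine change of the
variable turns this into the stated identity. -/

open Polynomial

theorem Matrix.eval_charpoly_smul_add_smul_one {n K : Type*} [Fintype n] [DecidableEq n]
    [Field K] (M : Matrix n n K) {a : K} (ha : a ≠ 0) (c t : K) :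
    (a • M + c • (1 : Matrix n n K)).charpoly.eval t =
      a ^ Fintype.card n * M.charpoly.eval ((t - c) / a) := by
  have hscalar : scalar n t - (a • M + c • 1) = a • (scalar n ((t - c) / a) - M) := by
    simp only [scalar_apply, ← smul_one_eq_diagonal, smul_sub, smul_smul, mul_div_cancel₀ _ ha,
      sub_smul]
    abel
  rw [eval_charpoly, eval_charpoly, hscalar, det_smul]

theorem Aalpha_eq_s12 {W : Type*} [Fintype W] [DecidableEq W] (α : ℝ) (H : SimpleGraph W)
    [DecidableRel H.Adj] :
    Aalpha α H = α • diagonal (fun v => (H.degree v : ℝ)) + (1 - α) • H.adjMatrix ℝ := by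
  unfold Aalpha
  congr!

theorem Sym2.card_filter_mem_and_mem_le_one {V : Type*} [Fintype V] [DecidableEq V]
    {e f : Sym2 V} (hef : e ≠ f) : #{v | v ∈ e ∧ v ∈ f} ≤ 1 := by
  refine Finset.card_le_one.2 fun u hu w hw => by_contra fun huw => hef ?_
  simp only [Finset.mem_filter, Finset.mem_univ, true_and] at hu hw
  exact ((Sym2.mem_and_mem_iff huw).1 ⟨hu.1, hw.1⟩).trans
    ((Sym2.mem_and_mem_iff huw).1 ⟨hu.2, hw.2⟩).symm

namespace SimpleGraph

variable {V : Type*} [Fintype V] (G : SimpleGraph V)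

theorem sum_edgeSet_eq_sum_sym2 {f : Sym2 V → ℝ} (hf : ∀ e ∉ G.edgeSet, f e = 0) :
    ∑ e : G.edgeSet, f e = ∑ e : Sym2 V, f e := by
  rw [← Finset.sum_subtype G.edgeFinset (fun _ => mem_edgeFinset) f]
  exact Finset.sum_subset (Finset.subset_univ _) fun e _ he => hf e (by simpa using he)

theorem IsRegularOfDegree.card_le_card_edgeSet [DecidableRel G.Adj] {r : ℕ}
    (hreg : G.IsRegularOfDegree r) (hr : 2 ≤ r) : Fintype.card V ≤ Fintype.card G.edgeSet := by
  have hsum := G.sum_degrees_eq_twice_card_edges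
  simp only [hreg.degree_eq, sum_const, card_univ, smul_eq_mul] at hsum
  simp only [edgeFinset, Set.toFinset_card, Fintype.card_eq_nat_card] at hsum ⊢
  nlinarith

variable [DecidableEq V]

theorem incB_eq_incMatrix [DecidableRel G.Adj] (v : V) (e : G.edgeSet) :
    incB G v e = G.incMatrix ℝ v e := by
  simp [incB, incMatrix_apply', incidenceSet, e.2]

theorem incB_apply (v : V) (e : G.edgeSet) : incB G v e = if v ∈ (e : Sym2 V) then 1 else 0 := by
  simp [incB]

theorem incB_mul_incB (v : V) (e f : G.edgeSet) :
    incB G v e * incB G v f = if v ∈ (e : Sym2 V) ∧ v ∈ (f : Sym2 V) then 1 else 0 := by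
  simp only [incB_apply, ite_zero_mul_ite_zero, one_mul]

theorem sum_incB_apply_left (e : G.edgeSet) : ∑ v, incB G v e = 2 := by
  classical
  simp_rw [incB_eq_incMatrix]
  exact G.sum_incMatrix_apply_of_mem_edgeSet e.2

theorem sum_incB_apply_right [DecidableRel G.Adj] (v : V) : ∑ e, incB G v e = G.degree v := by
  simp_rw [incB_eq_incMatrix]
  rw [sum_edgeSet_eq_sum_sym2 G fun e he => G.incMatrix_of_notMem_incidenceSet fun h => he h.1]
  exact G.sum_incMatrix_apply

theorem incB_mul_transpose [DecidableRel G.Adj] :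
    incB G * (incB G)ᵀ = diagonal (fun v => (G.degree v : ℝ)) + G.adjMatrix ℝ := by
  ext a b
  have hQ := congrFun (congrFun (G.incMatrix_mul_transpose (R := ℝ)) a) b
  rw [mul_apply] at hQ ⊢
  simp_rw [transpose_apply, incB_eq_incMatrix] at hQ ⊢
  rw [sum_edgeSet_eq_sum_sym2 G (f := fun e => G.incMatrix ℝ a e * G.incMatrix ℝ b e)
    fun e he => by rw [G.incMatrix_of_notMem_incidenceSet fun h => he h.1, zero_mul], hQ]
  rcases eq_or_ne a b with rfl | hab
  · simp
  · simp [hab]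

theorem transpose_incB_mul_incB [DecidableEq G.edgeSet] [DecidableRel G.lineGraph.Adj] :
    (incB G)ᵀ * incB G = (2 : ℝ) • 1 + G.lineGraph.adjMatrix ℝ := by
  ext e f
  rw [mul_apply]
  simp_rw [transpose_apply, incB_mul_incB]
  rcases eq_or_ne e f with rfl | hef
  · simp_rw [and_self, ← incB_apply]
    simp [sum_incB_apply_left]
  · rw [sum_boole]
    simp only [Matrix.add_apply, Matrix.smul_apply, one_apply_ne hef, smul_zero, zero_add,
      adjMatrix_apply, lineGraph_adj_iff_exists, ne_eq, hef, not_false_eq_true, true_and]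
    split_ifs with hcommon
    · obtain ⟨v, hv⟩ := hcommon
      have hpos : 0 < #{v | v ∈ (e : Sym2 V) ∧ v ∈ (f : Sym2 V)} :=
        card_pos.2 ⟨v, by simpa using hv⟩
      have hle := Sym2.card_filter_mem_and_mem_le_one (Subtype.coe_injective.ne hef)
      norm_cast
      omega
    · simpa [filter_eq_empty_iff] using hcommon

theorem IsRegularOfDegree.lineGraph_degree_add_two [DecidableRel G.Adj]
    [DecidableEq G.edgeSet] [DecidableRel G.lineGraph.Adj] {r : ℕ} (hreg : G.IsRegularOfDegree r)
    (e : G.edgeSet) : G.lineGraph.degree e + 2 = 2 * r := by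
  have hrow := congrFun (congrArg (· *ᵥ Function.const _ (1 : ℝ)) (transpose_incB_mul_incB G)) e
  simp only [← mulVec_mulVec, add_mulVec, smul_mulVec, one_mulVec, Pi.add_apply, Pi.smul_apply,
    adjMatrix_mulVec_const_apply] at hrow
  have hrowB : incB G *ᵥ Function.const _ 1 = Function.const _ (r : ℝ) := by
    ext v
    simp [mulVec, dotProduct, sum_incB_apply_right, hreg.degree_eq v]
  have hcolB : (incB G)ᵀ *ᵥ Function.const _ (r : ℝ) = Function.const _ (2 * r : ℝ) := by
    ext e
    simp [mulVec, dotProduct, ← sum_mul, sum_incB_apply_left]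
  rw [hrowB, hcolB] at hrow
  simp only [Function.const_apply, smul_eq_mul, mul_one] at hrow
  exact_mod_cast (by linarith : (G.lineGraph.degree e : ℝ) + 2 = 2 * r)

theorem IsRegularOfDegree.diagonal_lineGraph_degree [DecidableRel G.Adj]
    [DecidableEq G.edgeSet] [DecidableRel G.lineGraph.Adj] {r : ℕ} (hreg : G.IsRegularOfDegree r) :
    diagonal (fun e => (G.lineGraph.degree e : ℝ)) = (2 * r - 2 : ℝ) • 1 := by
  rw [smul_one_eq_diagonal]
  congr with e
  have := hreg.lineGraph_degree_add_two G e
  rify at this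
  linarith

theorem IsRegularOfDegree.Aalpha_lineGraph [DecidableRel G.Adj] {r : ℕ}
    (hreg : G.IsRegularOfDegree r) (α : ℝ) :
    Aalpha α G.lineGraph = (1 - α) • ((incB G)ᵀ * incB G) + (2 * r * α - 2) • 1 := by
  classical
  rw [Aalpha_eq_s12, hreg.diagonal_lineGraph_degree,
    eq_sub_of_add_eq' (transpose_incB_mul_incB G).symm]
  module

end SimpleGraph

theorem stmt12_general {V : Type*} [Fintype V] [DecidableEq V] (G : SimpleGraph V)
    [DecidableRel G.Adj] (r : ℕ) (hr : 2 ≤ r) (hreg : G.IsRegularOfDegree r)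
    (α : ℝ) (hα : α ∈ Set.Ico (0:ℝ) 1) (lam : ℝ) :
    (Aalpha α (G.lineGraph)).charpoly.eval lam =
      (lam - 2 * (r : ℝ) * α + 2) ^ (Fintype.card G.edgeSet - Fintype.card V) *
        (1 - α) ^ (Fintype.card V) *
          (Matrix.diagonal (fun v => (G.degree v : ℝ)) + G.adjMatrix ℝ).charpoly.eval
            ((lam - 2 * (r : ℝ) * α + 2) / (1 - α)) := by
  have hα1 : 1 - α ≠ 0 := sub_ne_zero.2 hα.2.ne'
  have hshift : lam - (2 * r * α - 2) = lam - 2 * r * α + 2 := by ring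
  have hnm := hreg.card_le_card_edgeSet G hr
  obtain ⟨k, hk⟩ := Nat.exists_eq_add_of_le hnm
  rw [hreg.Aalpha_lineGraph, eval_charpoly_smul_add_smul_one _ hα1,
    charpoly_mul_comm_of_le _ _ hnm, G.incB_mul_transpose,
    eval_mul, eval_pow, eval_X, hk, Nat.add_sub_cancel_left, hshift, div_pow]
  field_simp
  ring

theorem stmt12 {V : Type*} [Fintype V] [DecidableEq V] (G : SimpleGraph V)
    [DecidableRel G.Adj] (r : ℕ) (hr : 2 ≤ r) (hreg : G.IsRegularOfDegree r)
    (hm : 1 ≤ Fintype.card G.edgeSet) (α : ℝ) (hα : α ∈ Set.Ico (0:ℝ) 1) (lam : ℝ) :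
    (Aalpha α (G.lineGraph)).charpoly.eval lam =
      (lam - 2 * (r : ℝ) * α + 2) ^ (Fintype.card G.edgeSet - Fintype.card V) *
        (1 - α) ^ (Fintype.card V) *
          (Matrix.diagonal (fun v => (G.degree v : ℝ)) + G.adjMatrix ℝ).charpoly.eval
            ((lam - 2 * (r : ℝ) * α + 2) / (1 - α)) :=
  stmt12_general G r hr hreg α hα lam
end

section
/- For α ∈ [0,1], the spectrum of A_α(l(K_{n,n})) consists of 2n−2 with multiplicity 1, n(α+1)−2 with multiplicity 2n−2, and 2αn−2 with multiplicity n² −2n + 1. -/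
open Matrix SimpleGraph Finset

/-!
The line graph of `K_{n,n}` is the rook's graph `K_n □ K_n`, which is `(2n-2)`-regular, so
`A_α = α(2n-2) I + (1-α)(A ⊗ I + I ⊗ A)` where `A = J - I` is the adjacency matrix of `K_n`.
The matrix `A` is diagonalised by the all-ones vector (eigenvalue `n-1`) together with the vectors
`e_{v₀} - e_j`, `j ≠ v₀` (eigenvalue `-1`). The Kronecker square of this basis diagonalises
`A_α`, with eigenvalues `α(2n-2) + (1-α)(λ_i + λ_j)`.
-/

open Polynomial
open scoped Kronecker

theorem Multiset.replicate_product_replicate {α β : Type*} (k l : ℕ) (a : α) (b : β) :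
    replicate k a ×ˢ replicate l b = replicate (k * l) (a, b) := by
  refine eq_replicate.mpr ⟨by rw [card_product, card_replicate, card_replicate], ?_⟩
  intro p hp
  exact Prod.ext (eq_of_mem_replicate (mem_product.mp hp).1)
    (eq_of_mem_replicate (mem_product.mp hp).2)

theorem Finset.univ_val_map_prod {α β γ δ ε : Type*} [Fintype α] [Fintype β] (f : α → γ)
    (g : β → δ) (h : γ → δ → ε) :
    (univ : Finset (α × β)).val.map (fun p => h (f p.1) (g p.2)) =
      ((univ.val.map f) ×ˢ (univ.val.map g)).map (fun q => h q.1 q.2) := by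
  rw [← Finset.univ_product_univ, Finset.product_val]
  simp [SProd.sprod, Multiset.product, Multiset.map_bind, Multiset.bind_map, Multiset.map_map]

namespace Matrix

variable {R ι κ : Type*} [Fintype ι] [DecidableEq ι] [Fintype κ] [DecidableEq κ]

theorem charpoly_eq_prod_of_mul_eq_mul_diagonal [CommRing R] {M P Q : Matrix ι ι R}
    {d : ι → R} (hPQ : P * Q = 1) (h : M * P = P * diagonal d) :
    M.charpoly = ∏ i, (X - C (d i)) := by
  have hM : M = P * diagonal d * Q := by rw [← h, Matrix.mul_assoc, hPQ, Matrix.mul_one]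
  rw [hM, charpoly_mul_comm, ← Matrix.mul_assoc, mul_eq_one_comm.mp hPQ, Matrix.one_mul,
    charpoly_diagonal]

theorem charpoly_roots_of_mul_eq_mul_diagonal [CommRing R] [IsDomain R] {M P Q : Matrix ι ι R}
    {d : ι → R} (hPQ : P * Q = 1) (h : M * P = P * diagonal d) :
    M.charpoly.roots = univ.val.map d := by
  rw [charpoly_eq_prod_of_mul_eq_mul_diagonal hPQ h, Finset.prod_eq_multiset_prod]
  convert roots_multiset_prod_X_sub_C (univ.val.map d) using 3
  rw [Multiset.map_map, Function.comp_def]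

theorem kroneckerSum_mul_kronecker_of_mul_eq_mul_diagonal [CommSemiring R]
    {A P : Matrix ι ι R} {B Q : Matrix κ κ R} {a : ι → R} {b : κ → R}
    (hA : A * P = P * diagonal a) (hB : B * Q = Q * diagonal b) :
    (A ⊗ₖ 1 + 1 ⊗ₖ B) * (P ⊗ₖ Q) = (P ⊗ₖ Q) * diagonal fun p => a p.1 + b p.2 := by
  have hsum : diagonal (fun p : ι × κ => a p.1 + b p.2) =
      diagonal a ⊗ₖ 1 + 1 ⊗ₖ diagonal b := by
    rw [← diagonal_one (n := ι), ← diagonal_one (n := κ), diagonal_kronecker_diagonal,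
      diagonal_kronecker_diagonal, diagonal_add]
    simp
  rw [hsum, Matrix.add_mul, Matrix.mul_add, ← mul_kronecker_mul, ← mul_kronecker_mul,
    ← mul_kronecker_mul, ← mul_kronecker_mul, hA, hB, Matrix.one_mul, Matrix.mul_one,
    Matrix.one_mul, Matrix.mul_one]

theorem smul_one_add_smul_mul_of_mul_eq_mul_diagonal [CommSemiring R] {M P : Matrix ι ι R}
    {d : ι → R} (c s : R) (h : M * P = P * diagonal d) :
    (c • 1 + s • M) * P = P * diagonal (fun i => c + s * d i) := by
  have : diagonal (fun i => c + s * d i) = c • 1 + s • diagonal d := by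
    ext i j; by_cases hij : i = j <;> simp [hij]
  rw [this, Matrix.add_mul, Matrix.mul_add, Matrix.smul_mul, Matrix.mul_smul, Matrix.smul_mul,
    Matrix.mul_smul, h, Matrix.one_mul, Matrix.mul_one]

end Matrix

namespace SimpleGraph

variable {V W : Type*}

section CompleteGraphEigenbasis

variable {K : Type*} [Fintype V] [DecidableEq V] [Field K]

def completeGraphEigenbasis (v₀ : V) : Matrix V V K :=
  of fun i j => if j = v₀ then 1 else (if i = v₀ then 1 else 0) - (if i = j then 1 else 0)

def completeGraphEigenbasisInv (v₀ : V) : Matrix V V K :=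
  (Fintype.card V : K)⁻¹ • of 1 - diagonal fun i => if i = v₀ then 0 else 1

def completeGraphEigenvalue (v₀ i : V) : K :=
  if i = v₀ then (Fintype.card V : K) - 1 else -1

theorem of_one_mul_completeGraphEigenbasis (v₀ : V) :
    of 1 * completeGraphEigenbasis v₀ =
      completeGraphEigenbasis (K := K) v₀ *
        diagonal fun j => if j = v₀ then (Fintype.card V : K) else 0 := by
  ext i j
  rw [mul_diagonal]
  by_cases hj : j = v₀
  · simp [mul_apply, completeGraphEigenbasis, hj]
  · simp [mul_apply, completeGraphEigenbasis, hj, Finset.sum_sub_distrib]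

theorem completeGraphEigenbasis_mul_inv [CharZero K] (v₀ : V) :
    completeGraphEigenbasis (K := K) v₀ * completeGraphEigenbasisInv v₀ = 1 := by
  rw [mul_eq_one_comm, completeGraphEigenbasisInv, Matrix.sub_mul, Matrix.smul_mul,
    of_one_mul_completeGraphEigenbasis]
  have hV : (Fintype.card V : K) ≠ 0 :=
    Nat.cast_ne_zero.mpr (Fintype.card_pos_iff.mpr ⟨v₀⟩).ne'
  ext i j
  rw [Matrix.sub_apply, Matrix.smul_apply, mul_diagonal, diagonal_mul]
  by_cases hj : j = v₀ <;> by_cases hi : i = v₀ <;> by_cases hij : i = j <;>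
    simp_all [completeGraphEigenbasis, one_apply]

theorem univ_val_map_completeGraphEigenvalue (v₀ : V) :
    univ.val.map (completeGraphEigenvalue (K := K) v₀) =
      ((Fintype.card V : K) - 1) ::ₘ Multiset.replicate (Fintype.card V - 1) (-1) := by
  have hv₀ : completeGraphEigenvalue (K := K) v₀ v₀ = (Fintype.card V : K) - 1 := if_pos rfl
  have hv : ∀ v ∈ univ.val.erase v₀, completeGraphEigenvalue (K := K) v₀ v = -1 :=
    fun v hv => if_neg (univ.nodup.mem_erase_iff.mp hv).1
  rw [← Multiset.cons_erase (mem_univ_val v₀), Multiset.map_cons, hv₀,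
    Multiset.map_congr rfl hv, Multiset.map_const', Multiset.card_erase_of_mem (mem_univ_val v₀),
    card_val, card_univ, Nat.pred_eq_sub_one]

theorem adjMatrix_completeGraph_mul_eigenbasis (v₀ : V) :
    (completeGraph V).adjMatrix K * completeGraphEigenbasis v₀ =
      completeGraphEigenbasis v₀ * diagonal (completeGraphEigenvalue v₀) := by
  rw [adjMatrix_completeGraph_eq_of_one_sub_one, Matrix.sub_mul, Matrix.one_mul,
    of_one_mul_completeGraphEigenbasis]
  ext i j
  rw [Matrix.sub_apply, mul_diagonal, mul_diagonal, completeGraphEigenvalue]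
  split_ifs <;> ring

end CompleteGraphEigenbasis

theorem IsRegularOfDegree.Aalpha_eq [Fintype V] [DecidableEq V] {G : SimpleGraph V}
    [DecidableRel G.Adj] [G.LocallyFinite] {d : ℕ} (hG : G.IsRegularOfDegree d) (α : ℝ) :
    Aalpha α G = (α * d) • 1 + (1 - α) • G.adjMatrix ℝ := by
  -- `Aalpha` uses classical decidability instances, which only agree with ours up to `Subsingleton`.
  have hdeg : ∀ v (_ : Fintype (G.neighborSet v)), G.degree v = d := fun v _ => by
    convert hG v
  rw [Aalpha]
  simp only [hdeg]
  rw [mul_smul, smul_one_eq_diagonal]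
  congr
  exact Subsingleton.elim _ _

theorem Iso.reindex_Aalpha [Fintype V] [Fintype W] {G : SimpleGraph V} {H : SimpleGraph W}
    (f : G ≃g H) (α : ℝ) : (Aalpha α G).reindex f f = Aalpha α H := by
  classical
  ext i j
  have hdeg : G.degree ((f : V ≃ W).symm i) = H.degree i := f.symm.degree_eq i
  have hadj : G.Adj ((f : V ≃ W).symm i) ((f : V ≃ W).symm j) ↔ H.Adj i j :=
    f.symm.map_adj_iff
  simp [Aalpha, diagonal_apply, hdeg, hadj]

theorem adjMatrix_boxProd {R : Type*} [Semiring R] [DecidableEq V] [DecidableEq W]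
    (G : SimpleGraph V) (H : SimpleGraph W) [DecidableRel G.Adj] [DecidableRel H.Adj]
    [DecidableRel (G □ H).Adj] :
    (G □ H).adjMatrix R = G.adjMatrix R ⊗ₖ 1 + 1 ⊗ₖ H.adjMatrix R := by
  ext ⟨a, b⟩ ⟨a', b'⟩
  by_cases ha : a = a' <;> by_cases hb : b = b' <;> simp [ha, hb, boxProd_adj, one_apply]

theorem IsRegularOfDegree.boxProd {G : SimpleGraph V} {H : SimpleGraph W} [G.LocallyFinite]
    [H.LocallyFinite] [(G □ H).LocallyFinite] {d e : ℕ} (hG : G.IsRegularOfDegree d)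
    (hH : H.IsRegularOfDegree e) : (G □ H).IsRegularOfDegree (d + e) := fun x => by
  rw [degree_boxProd, hG.degree_eq, hH.degree_eq]

variable (V W) in
noncomputable def completeGraphBoxProdIsoLineGraph :
    (completeGraph V □ completeGraph W : SimpleGraph (V × W)) ≃g
      (completeBipartiteGraph V W).lineGraph where
  toEquiv := Equiv.ofBijective (fun p => ⟨s(Sum.inl p.1, Sum.inr p.2), by simp⟩) (by
    constructor
    · rintro ⟨a, b⟩ ⟨a', b'⟩ h
      simpa using h
    · rintro ⟨e, he⟩
      induction e with
      | _ x y =>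
        rcases x with a | b <;> rcases y with a' | b' <;> simp at he
        · exact ⟨(a, b'), rfl⟩
        · exact ⟨(a', b), Subtype.ext Sym2.eq_swap⟩)
  map_rel_iff' := by
    rintro ⟨a, b⟩ ⟨a', b'⟩
    simp only [Equiv.ofBijective, Equiv.coe_fn_mk, lineGraph_adj_iff_exists, boxProd_adj, top_adj]
    simp
    tauto

section

variable [Fintype V] [DecidableEq V] [Fintype W] [DecidableEq W]

theorem Aalpha_completeGraph_boxProd_mul_eigenbasis (v₀ : V) (w₀ : W) (α : ℝ) :
    Aalpha α (completeGraph V □ completeGraph W) *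
        (completeGraphEigenbasis v₀ ⊗ₖ completeGraphEigenbasis w₀) =
      (completeGraphEigenbasis v₀ ⊗ₖ completeGraphEigenbasis w₀) *
        diagonal fun p => α * ((Fintype.card V - 1 + (Fintype.card W - 1) : ℕ) : ℝ) +
          (1 - α) * (completeGraphEigenvalue v₀ p.1 + completeGraphEigenvalue w₀ p.2) := by
  classical
  rw [IsRegularOfDegree.Aalpha_eq (IsRegularOfDegree.top.boxProd IsRegularOfDegree.top),
    adjMatrix_boxProd]
  exact smul_one_add_smul_mul_of_mul_eq_mul_diagonal _ _
    (kroneckerSum_mul_kronecker_of_mul_eq_mul_diagonal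
      (adjMatrix_completeGraph_mul_eigenbasis v₀) (adjMatrix_completeGraph_mul_eigenbasis w₀))

theorem charpoly_roots_Aalpha_completeGraph_boxProd (v₀ : V) (w₀ : W) (α : ℝ) :
    (Aalpha α (completeGraph V □ completeGraph W)).charpoly.roots =
      {((Fintype.card V : ℝ) + Fintype.card W - 2)} +
        Multiset.replicate (Fintype.card W - 1) ((Fintype.card V : ℝ) + α * Fintype.card W - 2) +
        Multiset.replicate (Fintype.card V - 1) ((Fintype.card W : ℝ) + α * Fintype.card V - 2) +
        Multiset.replicate ((Fintype.card V - 1) * (Fintype.card W - 1))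
          (α * (Fintype.card V + Fintype.card W) - 2) := by
  have hQ : (completeGraphEigenbasis v₀ ⊗ₖ completeGraphEigenbasis w₀) *
        (completeGraphEigenbasisInv v₀ ⊗ₖ completeGraphEigenbasisInv w₀) =
      (1 : Matrix _ _ ℝ) := by
    rw [← mul_kronecker_mul, completeGraphEigenbasis_mul_inv, completeGraphEigenbasis_mul_inv,
      one_kronecker_one]
  have hV : 1 ≤ Fintype.card V := Fintype.card_pos_iff.mpr ⟨v₀⟩
  have hW : 1 ≤ Fintype.card W := Fintype.card_pos_iff.mpr ⟨w₀⟩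
  have hd : ((Fintype.card V - 1 + (Fintype.card W - 1) : ℕ) : ℝ) =
      Fintype.card V + Fintype.card W - 2 := by
    push_cast [Nat.cast_sub hV, Nat.cast_sub hW]; ring
  rw [charpoly_roots_of_mul_eq_mul_diagonal hQ
      (Aalpha_completeGraph_boxProd_mul_eigenbasis v₀ w₀ α), hd, Finset.univ_val_map_prod _ _
      (fun x y => α * (Fintype.card V + Fintype.card W - 2) + (1 - α) * (x + y)),
    univ_val_map_completeGraphEigenvalue, univ_val_map_completeGraphEigenvalue,
    Multiset.cons_product, Multiset.product_cons, Multiset.replicate_product_replicate]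
  simp only [Multiset.map_add, Multiset.map_cons, Multiset.map_replicate]
  rw [Multiset.singleton_add, Multiset.cons_add, Multiset.cons_add, Multiset.cons_add, add_assoc]
  congr 1
  · ring
  · congr 1
    · congr 1; ring
    · congr 1 <;> congr 1 <;> ring

end

end SimpleGraph

theorem stmt14_general (n : ℕ) (hn : 1 ≤ n) (α : ℝ) :
    (Aalpha α ((completeBipartiteGraph (Fin n) (Fin n)).lineGraph)).charpoly.roots =
      {(2 * (n : ℝ) - 2)} + Multiset.replicate (2 * n - 2) ((n : ℝ) * (α + 1) - 2) +
        Multiset.replicate (n ^ 2 + 1 - 2 * n) (2 * α * (n : ℝ) - 2) := by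
  rw [← (completeGraphBoxProdIsoLineGraph (Fin n) (Fin n)).reindex_Aalpha, charpoly_reindex,
    charpoly_roots_Aalpha_completeGraph_boxProd ⟨0, hn⟩ ⟨0, hn⟩, Fintype.card_fin]
  have hlin : 2 * n - 2 = (n - 1) + (n - 1) := by omega
  have hsq : n ^ 2 + 1 - 2 * n = (n - 1) * (n - 1) := by
    have : 2 * n ≤ n ^ 2 + 1 := by nlinarith
    zify [hn, this]
    ring
  have h₁ : (n : ℝ) + n - 2 = 2 * n - 2 := by ring
  have h₂ : (n : ℝ) + α * n - 2 = n * (α + 1) - 2 := by ring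
  have h₃ : α * ((n : ℝ) + n) - 2 = 2 * α * n - 2 := by ring
  rw [h₁, h₂, h₃, hlin, hsq, Multiset.replicate_add, ← add_assoc]

theorem stmt14 (n : ℕ) (hn : 1 ≤ n) (α : ℝ) (hα : α ∈ Set.Icc (0:ℝ) 1) :
    (Aalpha α ((completeBipartiteGraph (Fin n) (Fin n)).lineGraph)).charpoly.roots =
      {(2 * (n : ℝ) - 2)} + Multiset.replicate (2 * n - 2) ((n : ℝ) * (α + 1) - 2) +
        Multiset.replicate (n ^ 2 + 1 - 2 * n) (2 * α * (n : ℝ) - 2) :=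
  stmt14_general n hn α
end

section
/- Let G be a connected graph on n vertices and α ∈ [0,1). Then λ₁(A_α(l(G))) < 2 if and only if G is the path P_n. -/
open Matrix SimpleGraph Finset

/-!
Write `A_α(H) = D - (1 - α) L` with `L` the Laplacian of `H`, so that
`2 ‖x‖² - xᵀ A_α(H) x = ∑ᵢ (2 - dᵢ) xᵢ² + (1 - α) xᵀ L x`.

If `G` is a path, `l(G)` has a copy in the ray `hasse ℕ`, so its degrees are at most two and
both terms are nonnegative. Equality would make `x` constant along edges, so the support of `x`
is closed under adjacency; its vertex with the largest label then has degree at most one, and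
there `x` must vanish. Hence `λ₁ < 2`.

If `G` is not a path, either some vertex has degree at least three and the edges at it form a
clique of size at least three in `l(G)`, or every degree is at least two (a connected graph of
maximum degree two with a vertex `v₀` of degree at most one is a path, ordered by the distance
from `v₀`), and then every vertex of `l(G)` has two distinct neighbours. In both cases there is a
nonempty set `S` of vertices of `l(G)` each having two neighbours in `S`, and the indicator `x`
of `S` satisfies `xᵀ A_α x ≥ 2 ‖x‖²`. Hence `λ₁ ≥ 2`.
-/

namespace Matrix.IsHermitian

variable {ι : Type*} [Fintype ι] [DecidableEq ι] {M : Matrix ι ι ℝ}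

lemma dotProduct_mulVec_le_iSup_eigenvalues_mul_s15 (hM : M.IsHermitian) (x : ι → ℝ) :
    x ⬝ᵥ (M *ᵥ x) ≤ (⨆ i, hM.eigenvalues i) * (x ⬝ᵥ x) := by
  set c := ⨆ i, hM.eigenvalues i
  set U : Matrix ι ι ℝ := (hM.eigenvectorUnitary : Matrix ι ι ℝ)
  have hUU : U * star U = 1 := Unitary.mul_star_self_of_mem hM.eigenvectorUnitary.2
  have hshift : c • 1 - M = U * diagonal (fun i => c - hM.eigenvalues i) * Uᴴ := by
    have hdiag : diagonal (fun i => c - hM.eigenvalues i) = c • 1 - diagonal hM.eigenvalues := by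
      ext i j
      by_cases hij : i = j <;> simp [hij]
    rw [← star_eq_conjTranspose, hdiag, mul_sub, sub_mul, mul_smul_comm, mul_one, smul_mul_assoc,
      hUU]
    conv_lhs => rw [hM.spectral_theorem, Unitary.conjStarAlgAut_apply]
    simp [U, RCLike.ofReal_real_eq_id]
  have hpsd : (c • 1 - M).PosSemidef := by
    rw [hshift]
    refine PosSemidef.mul_mul_conjTranspose_same (posSemidef_diagonal_iff.mpr fun i => ?_) U
    exact sub_nonneg.mpr (le_ciSup (Set.finite_range _).bddAbove i)
  have := hpsd.dotProduct_mulVec_nonneg x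
  rw [star_trivial, sub_mulVec, dotProduct_sub, smul_mulVec, one_mulVec, dotProduct_smul,
    smul_eq_mul] at this
  linarith

lemma eigenvalues_lt_of_forall_dotProduct_mulVec_lt (hM : M.IsHermitian) {c : ℝ}
    (h : ∀ x ≠ 0, x ⬝ᵥ (M *ᵥ x) < c * (x ⬝ᵥ x)) (i : ι) : hM.eigenvalues i < c := by
  set v : ι → ℝ := ⇑(hM.eigenvectorBasis i)
  have hv : v ≠ 0 := fun h0 => hM.eigenvectorBasis.orthonormal.ne_zero i
    (by simpa [v] using congrArg (WithLp.toLp 2) h0)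
  have hvv : 0 < v ⬝ᵥ v := by simpa using dotProduct_star_self_pos_iff.mpr hv
  have := h v hv
  rw [mulVec_eigenvectorBasis, dotProduct_smul, smul_eq_mul] at this
  exact lt_of_mul_lt_mul_right this hvv.le

end Matrix.IsHermitian

section Aalpha

variable {ι : Type*} [Fintype ι] [DecidableEq ι] (H : SimpleGraph ι) [DecidableRel H.Adj]

lemma Aalpha_eq_smul_degMatrix_add_smul_adjMatrix (α : ℝ) :
    Aalpha α H = α • H.degMatrix ℝ + (1 - α) • H.adjMatrix ℝ := by
  unfold Aalpha degMatrix
  congr!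

lemma Aalpha_eq_degMatrix_sub_smul_lapMatrix (α : ℝ) :
    Aalpha α H = H.degMatrix ℝ - (1 - α) • H.lapMatrix ℝ := by
  rw [Aalpha_eq_smul_degMatrix_add_smul_adjMatrix, lapMatrix]
  module

lemma dotProduct_Aalpha_mulVec (α : ℝ) (x : ι → ℝ) :
    x ⬝ᵥ (Aalpha α H *ᵥ x) =
      ∑ i, H.degree i * x i * x i - (1 - α) * (x ⬝ᵥ (H.lapMatrix ℝ *ᵥ x)) := by
  rw [Aalpha_eq_degMatrix_sub_smul_lapMatrix, sub_mulVec, dotProduct_sub, smul_mulVec,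
    dotProduct_smul, dotProduct_mulVec_degMatrix, smul_eq_mul]

end Aalpha

namespace SimpleGraph

def MinDegreeTwoOn {ι : Type*} (H : SimpleGraph ι) (S : Finset ι) : Prop :=
  ∀ i ∈ S, ∃ j ∈ S, ∃ k ∈ S, j ≠ k ∧ H.Adj i j ∧ H.Adj i k

lemma IsClique.minDegreeTwoOn {ι : Type*} {H : SimpleGraph ι} {S : Finset ι}
    (hS : H.IsClique (S : Set ι)) (h3 : 2 < #S) : H.MinDegreeTwoOn S := by
  classical
  intro i hi
  obtain ⟨j, hj, k, hk, hjk⟩ :=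
    one_lt_card.mp (by rw [card_erase_of_mem hi]; omega : 1 < #(S.erase i))
  rw [mem_erase] at hj hk
  exact ⟨j, hj.2, k, hk.2, hjk, hS hi hj.2 hj.1.symm, hS hi hk.2 hk.1.symm⟩

namespace MinDegreeTwoOn

variable {ι : Type*} [Fintype ι] [DecidableEq ι] {H : SimpleGraph ι} {S : Finset ι}

lemma exists_two_mul_le_dotProduct_Aalpha_mulVec (hS : H.MinDegreeTwoOn S) (hne : S.Nonempty)
    {α : ℝ} (h0 : 0 ≤ α) (h1 : α ≤ 1) : ∃ x ≠ 0, 2 * (x ⬝ᵥ x) ≤ x ⬝ᵥ (Aalpha α H *ᵥ x) := by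
  classical
  set x : ι → ℝ := fun i => if i ∈ S then 1 else 0
  have hrow : ∀ i ∈ S, 2 ≤ (Aalpha α H *ᵥ x) i := fun i hi => by
    obtain ⟨j, hj, k, hk, hjk, hij, hik⟩ := hS i hi
    have hpair : {j, k} ⊆ H.neighborFinset i := by simp [insert_subset_iff, hij, hik]
    have hdeg : (2 : ℝ) ≤ H.degree i := by
      have := card_le_card hpair
      rw [card_pair hjk, card_neighborFinset_eq_degree] at this
      exact mod_cast this
    have hnbr : (2 : ℝ) ≤ ∑ l ∈ H.neighborFinset i, x l :=
      calc (2 : ℝ) = ∑ l ∈ {j, k}, x l := by norm_num [sum_pair hjk, x, hj, hk]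
        _ ≤ _ := sum_le_sum_of_subset_of_nonneg hpair fun l _ _ => by positivity
    rw [Aalpha_eq_smul_degMatrix_add_smul_adjMatrix, add_mulVec, smul_mulVec, smul_mulVec,
      Pi.add_apply, Pi.smul_apply, Pi.smul_apply, degMatrix_mulVec_apply, adjMatrix_mulVec_apply]
    simp only [x, if_pos hi, smul_eq_mul, mul_one]
    nlinarith
  refine ⟨x, fun h => ?_, ?_⟩
  · obtain ⟨i, hi⟩ := hne
    simpa [x, hi] using congrFun h i
  · rw [← smul_eq_mul, ← dotProduct_smul]
    refine sum_le_sum fun i _ => ?_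
    by_cases hi : i ∈ S
    · simpa [x, hi] using hrow i hi
    · simp [x, hi]

lemma two_le_iSup_eigenvalues_Aalpha (hS : H.MinDegreeTwoOn S) (hne : S.Nonempty) {α : ℝ}
    (h0 : 0 ≤ α) (h1 : α ≤ 1) (hM : (Aalpha α H).IsHermitian) : 2 ≤ ⨆ i, hM.eigenvalues i := by
  obtain ⟨x, hx, hle⟩ := hS.exists_two_mul_le_dotProduct_Aalpha_mulVec hne h0 h1
  have hxx : 0 < x ⬝ᵥ x := by simpa using dotProduct_star_self_pos_iff.mpr hx
  exact le_of_mul_le_mul_right (hle.trans (hM.dotProduct_mulVec_le_iSup_eigenvalues_mul_s15 x)) hxx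

end MinDegreeTwoOn

lemma hasse_nat_adj {a b : ℕ} : (hasse ℕ).Adj a b ↔ a + 1 = b ∨ b + 1 = a := by
  simp [hasse_adj, Nat.covBy_iff_add_one_eq]

namespace Copy

variable {ι : Type*} {H : SimpleGraph ι}

lemma degree_le_two [H.LocallyFinite] (f : Copy H (hasse ℕ)) (i : ι) : H.degree i ≤ 2 := by
  rw [← card_neighborFinset_eq_degree]
  refine (card_le_card_of_injOn f (t := {f i + 1, f i - 1}) (fun j hj => ?_)
    f.injective.injOn).trans card_le_two
  have := f.toHom.map_adj ((mem_neighborFinset ..).mp hj)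
  simp only [toHom_apply, hasse_nat_adj] at this
  simp only [coe_insert, coe_singleton, Set.mem_insert_iff, Set.mem_singleton_iff]
  omega

lemma exists_mem_degree_le_one [H.LocallyFinite] (f : Copy H (hasse ℕ)) {s : Finset ι}
    (hs : s.Nonempty) (hclosed : ∀ i ∈ s, ∀ j, H.Adj i j → j ∈ s) :
    ∃ i ∈ s, H.degree i ≤ 1 := by
  obtain ⟨i, hi, hmax⟩ := s.exists_max_image f hs
  have hpred : ∀ j, H.Adj i j → f j + 1 = f i := fun j hj => by
    have := f.toHom.map_adj hj
    have := hmax j (hclosed i hi j hj)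
    simp only [toHom_apply, hasse_nat_adj] at *
    omega
  refine ⟨i, hi, ?_⟩
  rw [← card_neighborFinset_eq_degree, card_le_one]
  intro j hj k hk
  rw [mem_neighborFinset] at hj hk
  exact f.injective (by simpa using (hpred j hj).trans (hpred k hk).symm)

variable [Fintype ι] [DecidableEq ι] [DecidableRel H.Adj]

lemma dotProduct_Aalpha_mulVec_lt (f : Copy H (hasse ℕ)) {α : ℝ} (hα : α < 1) {x : ι → ℝ}
    (hx : x ≠ 0) : x ⬝ᵥ (Aalpha α H *ᵥ x) < 2 * (x ⬝ᵥ x) := by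
  set q := x ⬝ᵥ (H.lapMatrix ℝ *ᵥ x)
  have hq : 0 ≤ q := by simpa using (posSemidef_lapMatrix ℝ H).dotProduct_mulVec_nonneg x
  have hterm : ∀ i ∈ univ, 0 ≤ (2 - H.degree i : ℝ) * x i * x i := fun i _ => by
    rw [mul_assoc]
    exact mul_nonneg (sub_nonneg.mpr (mod_cast f.degree_le_two i)) (mul_self_nonneg _)
  have hgap : 2 * (x ⬝ᵥ x) - x ⬝ᵥ (Aalpha α H *ᵥ x) =
      ∑ i, (2 - H.degree i : ℝ) * x i * x i + (1 - α) * q := by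
    have : ∑ i, (2 - H.degree i : ℝ) * x i * x i =
        2 * (x ⬝ᵥ x) - ∑ i, H.degree i * x i * x i := by
      rw [dotProduct, mul_sum, ← sum_sub_distrib]
      exact sum_congr rfl fun i _ => by ring
    rw [this, dotProduct_Aalpha_mulVec]
    ring
  by_contra hge
  have hsum : ∑ i, (2 - H.degree i : ℝ) * x i * x i = 0 := by
    nlinarith [sum_nonneg hterm]
  have hconst : ∀ i j, H.Adj i j → x i = x j := by
    rw [← lapMatrix_toLinearMap₂'_apply'_eq_zero_iff_forall_adj, toLinearMap₂'_apply']
    nlinarith [sum_nonneg hterm]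
  obtain ⟨i, hi, hdeg⟩ := f.exists_mem_degree_le_one (s := {i | x i ≠ 0})
    (by simpa [Finset.Nonempty, Function.ne_iff] using hx)
    (fun i hi j hij => by simpa [← hconst i j hij] using hi)
  have hpos : 0 < (2 - H.degree i : ℝ) * x i * x i := by
    have : (H.degree i : ℝ) ≤ 1 := mod_cast hdeg
    rw [mul_assoc]
    exact mul_pos (by linarith) (mul_self_pos.mpr (by simpa using hi))
  exact hpos.ne' ((sum_eq_zero_iff_of_nonneg hterm).mp hsum i (mem_univ i))

lemma iSup_eigenvalues_Aalpha_lt_two (f : Copy H (hasse ℕ)) {α : ℝ} (hα : α < 1)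
    (hM : (Aalpha α H).IsHermitian) : ⨆ i, hM.eigenvalues i < 2 := by
  cases isEmpty_or_nonempty ι
  · rw [Real.iSup_of_isEmpty]
    norm_num
  obtain ⟨i, hi⟩ := Finite.exists_max hM.eigenvalues
  exact (ciSup_le hi).trans_lt <| hM.eigenvalues_lt_of_forall_dotProduct_mulVec_lt
    (fun x hx => f.dotProduct_Aalpha_mulVec_lt hα hx) i

end Copy

lemma exists_eq_mk_add_one_of_mem_edgeSet_hasse_nat {e : Sym2 ℕ} (he : e ∈ (hasse ℕ).edgeSet) :
    ∃ a, e = s(a, a + 1) := by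
  induction e using Sym2.inductionOn with | hf a b => ?_
  rw [mem_edgeSet, hasse_nat_adj] at he
  rcases he with rfl | rfl
  · exact ⟨a, rfl⟩
  · exact ⟨b, Sym2.eq_swap⟩

noncomputable def Copy.lineGraphHasseNat : Copy (hasse ℕ).lineGraph (hasse ℕ) := by
  choose low hlow using
    fun e : (hasse ℕ).edgeSet => exists_eq_mk_add_one_of_mem_edgeSet_hasse_nat e.2
  refine ⟨⟨low, fun {e f} h => ?_⟩,
    fun e f h => Subtype.ext (by rw [hlow e, hlow f, show low e = low f from h])⟩
  obtain ⟨hne, v, hve, hvf⟩ := lineGraph_adj_iff_exists.mp h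
  have hlow_ne : low e ≠ low f := fun h' => hne (Subtype.ext (by rw [hlow e, hlow f, h']))
  rw [hlow e, Sym2.mem_iff] at hve
  rw [hlow f, Sym2.mem_iff] at hvf
  rw [hasse_nat_adj]
  omega

def Copy.pathGraphHasseNat (n : ℕ) : Copy (pathGraph n) (hasse ℕ) :=
  ⟨⟨Fin.val, fun h => hasse_nat_adj.mpr (pathGraph_adj.mp h)⟩, Fin.val_injective⟩

noncomputable def Iso.lineGraphCopyHasseNat {V : Type*} {G : SimpleGraph V} {n : ℕ}
    (φ : G ≃g pathGraph n) : Copy G.lineGraph (hasse ℕ) :=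
  Copy.lineGraphHasseNat.comp ((Copy.pathGraphHasseNat n).lineGraph.comp φ.lineGraph.toCopy)

section Distance

variable {V : Type*} {G : SimpleGraph V} {v₀ : V}

lemma exists_adj_dist_eq_of_dist_eq_add_one {u : V} {k : ℕ} (h : G.dist v₀ u = k + 1) :
    ∃ p, G.Adj p u ∧ G.dist v₀ p = k := by
  obtain ⟨w, hw⟩ := exists_walk_of_dist_ne_zero (G := G) (u := u) (v := v₀)
    (by rw [dist_comm, h]; omega)
  cases w with
  | nil => simp at h
  | @cons _ p _ hadj r =>
    refine ⟨p, hadj.symm, le_antisymm ?_ ?_⟩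
    · have := dist_le r
      simp only [Walk.length_cons, dist_comm (u := u), h] at hw
      rw [dist_comm]
      omega
    · have := r.reverse.reachable.dist_triangle_left u
      rw [dist_eq_one_iff_adj.mpr hadj.symm, h] at this
      omega

lemma eq_of_adj_of_degree_le_one [G.LocallyFinite] {p u w : V} (hp : G.degree p ≤ 1)
    (hu : G.Adj p u) (hw : G.Adj p w) : u = w :=
  card_le_one.mp (by rwa [card_neighborFinset_eq_degree]) u ((mem_neighborFinset ..).mpr hu) w
    ((mem_neighborFinset ..).mpr hw)

lemma eq_of_adj_of_degree_le_two [G.LocallyFinite] {p q u w : V} (hp : G.degree p ≤ 2)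
    (hq : G.Adj p q) (hu : G.Adj p u) (hw : G.Adj p w) (hqu : q ≠ u) (hqw : q ≠ w) : u = w := by
  by_contra huw
  have : 2 < #(G.neighborFinset p) :=
    two_lt_card.mpr ⟨q, by simpa, u, by simpa, w, by simpa, hqu, hqw, huw⟩
  rw [card_neighborFinset_eq_degree] at this
  omega

lemma Connected.eq_of_dist_eq_zero (hc : G.Connected) {u : V} (h : G.dist v₀ u = 0) : u = v₀ :=
  ((dist_eq_zero_iff_eq_or_not_reachable.mp h).resolve_right
    (not_not.mpr (hc.preconnected _ _))).symm

lemma Connected.dist_injective_of_degree_le_two [G.LocallyFinite] (hc : G.Connected)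
    (hdeg : ∀ v, G.degree v ≤ 2) (h₀ : G.degree v₀ ≤ 1) : Function.Injective (G.dist v₀) := by
  suffices ∀ k u w, G.dist v₀ u = k → G.dist v₀ w = k → u = w from
    fun u w huw => this _ u w rfl huw.symm
  intro k
  induction k with
  | zero => exact fun u w hu hw => (hc.eq_of_dist_eq_zero hu).trans (hc.eq_of_dist_eq_zero hw).symm
  | succ k ih =>
    intro u w hu hw
    obtain ⟨p, hpu, hp⟩ := exists_adj_dist_eq_of_dist_eq_add_one hu
    obtain ⟨p', hpw, hp'⟩ := exists_adj_dist_eq_of_dist_eq_add_one hw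
    obtain rfl := ih p' p hp' hp
    cases k with
    | zero => exact eq_of_adj_of_degree_le_one (hc.eq_of_dist_eq_zero hp ▸ h₀) hpu hpw
    | succ j =>
      obtain ⟨q, hqp, hq⟩ := exists_adj_dist_eq_of_dist_eq_add_one hp
      exact eq_of_adj_of_degree_le_two (hdeg p') hqp.symm hpu hpw
        (fun h => by subst h; omega) (fun h => by subst h; omega)

lemma adj_iff_of_dist_injective (hinj : Function.Injective (G.dist v₀)) {u w : V} :
    G.Adj u w ↔ G.dist v₀ u + 1 = G.dist v₀ w ∨ G.dist v₀ w + 1 = G.dist v₀ u := by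
  refine ⟨fun h => ?_, ?_⟩
  · have hne : G.dist v₀ u ≠ G.dist v₀ w := hinj.ne h.ne
    rcases h.diff_dist_adj (u := v₀) with h' | h' | h' <;> omega
  · rintro (h | h)
    · obtain ⟨p, hp, hpu⟩ := exists_adj_dist_eq_of_dist_eq_add_one h.symm
      rwa [← hinj hpu]
    · obtain ⟨p, hp, hpw⟩ := exists_adj_dist_eq_of_dist_eq_add_one h.symm
      rw [← hinj hpw]
      exact hp.symm

lemma exists_dist_eq_of_le_dist {u : V} {j : ℕ} (hj : j ≤ G.dist v₀ u) :
    ∃ w, G.dist v₀ w = j := by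
  induction h : G.dist v₀ u generalizing u with
  | zero => exact ⟨u, by omega⟩
  | succ k ih =>
    rcases hj.lt_or_eq with hlt | heq
    · obtain ⟨p, -, hp⟩ := exists_adj_dist_eq_of_dist_eq_add_one h
      exact ih (by omega) hp
    · exact ⟨u, by omega⟩

lemma dist_lt_card_of_dist_injective [Fintype V] (hinj : Function.Injective (G.dist v₀))
    (u : V) : G.dist v₀ u < Fintype.card V := by
  have : range (G.dist v₀ u + 1) ⊆ univ.image (G.dist v₀) := fun j hj => by
    obtain ⟨w, hw⟩ := exists_dist_eq_of_le_dist (Nat.lt_succ_iff.mp (mem_range.mp hj))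
    exact mem_image.mpr ⟨w, mem_univ _, hw⟩
  have := card_le_card this
  rw [card_range, card_image_of_injective _ hinj, card_univ] at this
  omega

noncomputable def isoPathGraphOfDistInjective [Fintype V]
    (hinj : Function.Injective (G.dist v₀)) : G ≃g pathGraph (Fintype.card V) where
  toEquiv := Equiv.ofBijective (fun u => ⟨G.dist v₀ u, dist_lt_card_of_dist_injective hinj u⟩) <|
    (Fintype.bijective_iff_injective_and_card _).mpr
      ⟨fun u w h => hinj (Fin.mk.inj_iff.mp h), by simp⟩
  map_rel_iff' := by simp [pathGraph_adj, adj_iff_of_dist_injective hinj]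

end Distance

section LineGraph

variable {V : Type*} [Fintype V] {G : SimpleGraph V} [G.LocallyFinite]

lemma exists_minDegreeTwoOn_lineGraph_of_two_lt_degree {v : V} (hv : 2 < G.degree v) :
    ∃ S : Finset G.edgeSet, S.Nonempty ∧ G.lineGraph.MinDegreeTwoOn S := by
  classical
  set S : Finset G.edgeSet := {e | v ∈ (e : Sym2 V)}
  have hcard : G.degree v ≤ #S := by
    rw [← card_incidenceFinset_eq_degree, ← card_map (Function.Embedding.subtype _)]
    refine card_le_card fun e he => ?_
    rw [mem_incidenceFinset] at he
    exact mem_map.mpr ⟨⟨e, he.1⟩, by simpa [S] using he.2, rfl⟩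
  have hclique : G.lineGraph.IsClique (S : Set G.edgeSet) := fun e he f hf hne =>
    lineGraph_adj_iff_exists.mpr ⟨hne, v, by simpa [S] using he, by simpa [S] using hf⟩
  exact ⟨S, card_pos.mp (by omega), hclique.minDegreeTwoOn (by omega)⟩

lemma minDegreeTwoOn_lineGraph_univ (h : ∀ v, 2 ≤ G.degree v) :
    G.lineGraph.MinDegreeTwoOn univ := by
  have hnbr : ∀ a b, ∃ c, G.Adj a c ∧ c ≠ b := fun a b => by
    obtain ⟨c, hc, hcb⟩ := exists_mem_ne (s := G.neighborFinset a)
      (by rw [card_neighborFinset_eq_degree]; exact h a) b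
    exact ⟨c, (mem_neighborFinset ..).mp hc, hcb⟩
  rintro ⟨e, he⟩ -
  induction e using Sym2.inductionOn with | hf a b => ?_
  have hab : G.Adj a b := he
  obtain ⟨a', ha', ha'b⟩ := hnbr a b
  obtain ⟨b', hb', hb'a⟩ := hnbr b a
  refine ⟨⟨s(a, a'), ha'⟩, mem_univ _, ⟨s(b, b'), hb'⟩, mem_univ _, ?_,
    lineGraph_adj_iff_exists.mpr ⟨?_, a, by simp, by simp⟩,
    lineGraph_adj_iff_exists.mpr ⟨?_, b, by simp, by simp⟩⟩
  all_goals
    intro h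
    simp only [Subtype.ext_iff, Sym2.eq_iff] at h
    grind [hab.ne]

lemma Connected.exists_minDegreeTwoOn_lineGraph (hc : G.Connected)
    (hG : IsEmpty (G ≃g pathGraph (Fintype.card V))) :
    ∃ S : Finset G.edgeSet, S.Nonempty ∧ G.lineGraph.MinDegreeTwoOn S := by
  by_cases h3 : ∃ v, 2 < G.degree v
  · obtain ⟨v, hv⟩ := h3
    exact exists_minDegreeTwoOn_lineGraph_of_two_lt_degree hv
  push Not at h3
  by_cases h1 : ∃ v, G.degree v ≤ 1
  · obtain ⟨v₀, h₀⟩ := h1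
    exact hG.elim (isoPathGraphOfDistInjective (hc.dist_injective_of_degree_le_two h3 h₀))
  push Not at h1
  obtain ⟨v⟩ := hc.nonempty
  obtain ⟨w, hw⟩ := (G.degree_pos_iff_exists_adj v).mp (by have := h1 v; omega)
  exact ⟨univ, ⟨⟨s(v, w), hw⟩, mem_univ _⟩, minDegreeTwoOn_lineGraph_univ h1⟩

end LineGraph

end SimpleGraph

theorem stmt15_general {V : Type*} [Fintype V] [DecidableEq V] (G : SimpleGraph V)
    (hc : G.Connected) (α : ℝ) (hα : α ∈ Set.Ico (0:ℝ) 1)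
    (hM : (Aalpha α (G.lineGraph)).IsHermitian) :
    (⨆ i, hM.eigenvalues i) < 2 ↔
      Nonempty (G ≃g SimpleGraph.pathGraph (Fintype.card V)) := by
  classical
  refine ⟨fun hlt => ?_, fun ⟨φ⟩ => φ.lineGraphCopyHasseNat.iSup_eigenvalues_Aalpha_lt_two hα.2 hM⟩
  by_contra hpath
  obtain ⟨S, hne, hS⟩ := hc.exists_minDegreeTwoOn_lineGraph (not_nonempty_iff.mp hpath)
  exact (hS.two_le_iSup_eigenvalues_Aalpha hne hα.1 hα.2.le hM).not_gt hlt

theorem stmt15 {V : Type*} [Fintype V] [DecidableEq V] (G : SimpleGraph V)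
    [DecidableRel G.Adj] (hc : G.Connected) (α : ℝ) (hα : α ∈ Set.Ico (0:ℝ) 1)
    (hM : (Aalpha α (G.lineGraph)).IsHermitian) :
    (⨆ i, hM.eigenvalues i) < 2 ↔
      Nonempty (G ≃g SimpleGraph.pathGraph (Fintype.card V)) :=
  stmt15_general G hc α hα hM
end
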